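/- arXiv:2412.17712 — 3 statements merged into one kernel-verified Lean document; each statement's English description precedes it below -/
import Mathlib

section
/- Let p, h be commuting K×K symmetric positive semi-definite matrices, let w : [0,T] → ℝ^K be square integrable, and define Y_t = h ∫_0^t e^{(s-t)p} w_s ds and Q_t = ∫_0^t w_s ds. Then ∫_0^T Y_t^⊤ p Q_t dt = ∫_0^T Y_t^⊤ p h† Y_t dt + (1/2) (p ∫_0^T Y_t dt)^⊤ h† (p ∫_0^T Y_t dt), and in particular ∫_0^T Y_t^⊤ p Q_t dt ≥ 0. -/
/-!
Write `Y = h v`, where `v t = ∫₀ᵗ e^{(s-t)p} w_s ds` solves `v' = w - p v`, `v 0 = 0`, and let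
`U t = ∫₀ᵗ v`. Integrating the equation for `v` (Fubini on the triangle `0 < s ≤ u ≤ t`) gives
`Q = v + p U`. Since `h h† h = h`, this splits `Yᵀ p Q` as `Yᵀ p h† Y + vᵀ (p h p) U`, and as
`U' = v` with `p h p` symmetric, the last term integrates to
`½ U_Tᵀ (p h p) U_T = ½ (p ∫Y)ᵀ h† (p ∫Y)`. Both terms are nonnegative because `p h` (a product of
commuting positive semidefinite matrices) and `p h p` are positive semidefinite.
-/

open Matrix MeasureTheory Set

open scoped MatrixOrder

namespace Matrix

variable {m n : Type*} [Fintype m] [Fintype n]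

theorem mulVec_dotProduct_mulVec {k : Type*} [Fintype k] (A : Matrix m n ℝ) (B : Matrix m k ℝ)
    (a : n → ℝ) (b : k → ℝ) : A *ᵥ a ⬝ᵥ B *ᵥ b = a ⬝ᵥ (Aᵀ * B) *ᵥ b := by
  rw [← vecMul_transpose, ← dotProduct_mulVec, mulVec_mulVec]

theorem mulVec_intervalIntegral (M : Matrix m n ℝ) {f : ℝ → n → ℝ} {a b : ℝ}
    (hf : IntervalIntegrable f volume a b) :
    M *ᵥ ∫ x in a..b, f x = ∫ x in a..b, M *ᵥ f x :=
  ((mulVecLin M).toContinuousLinearMap.intervalIntegral_comp_comm hf).symm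

end Matrix

section Calculus

variable {𝕜 : Type*} [NontriviallyNormedField 𝕜] {n : Type*} [Fintype n]
  {f g : 𝕜 → n → 𝕜} {f' g' : n → 𝕜} {x : 𝕜}

theorem HasDerivAt.dotProduct (hf : HasDerivAt f f' x) (hg : HasDerivAt g g' x) :
    HasDerivAt (fun y => f y ⬝ᵥ g y) (f' ⬝ᵥ g x + f x ⬝ᵥ g') x := by
  rw [_root_.dotProduct, _root_.dotProduct, ← Finset.sum_add_distrib]
  exact HasDerivAt.fun_sum fun i _ => (hasDerivAt_pi.mp hf i).fun_mul (hasDerivAt_pi.mp hg i)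

theorem HasDerivAt.mulVec (M : Matrix n n 𝕜) (hf : HasDerivAt f f' x) :
    HasDerivAt (fun y => M *ᵥ f y) (M *ᵥ f') x :=
  hasDerivAt_pi.mpr fun i =>
    HasDerivAt.fun_sum fun j _ => (hasDerivAt_pi.mp hf j).const_mul (M i j)

end Calculus

theorem ContinuousOn.dotProduct_mulVec {X n : Type*} [TopologicalSpace X] [Fintype n]
    {f g : X → n → ℝ} {s : Set X} (hf : ContinuousOn f s) (M : Matrix n n ℝ)
    (hg : ContinuousOn g s) : ContinuousOn (fun x => f x ⬝ᵥ M *ᵥ g x) s :=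
  (continuous_fst.dotProduct (continuous_const.matrix_mulVec continuous_snd)).comp_continuousOn
    (hf.prodMk hg)

theorem MeasureTheory.IntegrableOn.continuousOn_mulVec_of_subset {X m n : Type*}
    [Fintype m] [Fintype n] [TopologicalSpace X] [MeasurableSpace X] [OpensMeasurableSpace X]
    {μ : Measure X} {A : X → Matrix m n ℝ} {f : X → n → ℝ} {K S : Set X}
    (hA : ContinuousOn A K) (hf : IntegrableOn f S μ) (hK : IsCompact K) (hS : MeasurableSet S)
    (hSK : S ⊆ K) : IntegrableOn (fun x => A x *ᵥ f x) S μ :=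
  integrable_pi_iff.mpr fun i => integrable_finsetSum _ fun j _ =>
    IntegrableOn.continuousOn_mul_of_subset
      ((continuous_apply j).comp_continuousOn ((continuous_apply i).comp_continuousOn hA))
      (integrable_pi_iff.mp hf j) hK hS hSK

theorem intervalIntegral.integral_integral_swap_triangle {E : Type*} [NormedAddCommGroup E]
    [NormedSpace ℝ E] {f : ℝ → ℝ → E} {a b : ℝ} (hab : a ≤ b)
    (hf : IntegrableOn (Function.uncurry f) (Ioc a b ×ˢ Ioc a b)) :
    ∫ u in a..b, ∫ s in a..u, f u s = ∫ s in a..b, ∫ u in s..b, f u s := by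
  set G := {z : ℝ × ℝ | z.2 ≤ z.1}.indicator (Function.uncurry f)
  have hG : Integrable G ((volume.restrict (Ioc a b)).prod (volume.restrict (Ioc a b))) := by
    rw [Measure.prod_restrict, ← Measure.volume_eq_prod]
    exact hf.indicator (measurableSet_le measurable_snd measurable_fst)
  have hrow : ∀ u ∈ Ioc a b, ∫ s in Ioc a b, G (u, s) = ∫ s in a..u, f u s := fun u hu => by
    have hGu : (fun s => G (u, s)) = (Iic u).indicator (f u) := by
      ext s; simp [G, indicator_apply]
    rw [hGu, setIntegral_indicator measurableSet_Iic, Ioc_inter_Iic, min_eq_right hu.2,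
      intervalIntegral.integral_of_le hu.1.le]
  have hcol : ∀ s ∈ Ioc a b, ∫ u in Ioc a b, G (u, s) = ∫ u in s..b, f u s := fun s hs => by
    have hGs : (fun u => G (u, s)) = (Ici s).indicator (fun u => f u s) := by
      ext u; simp [G, indicator_apply]
    have hIcc : Ioc a b ∩ Ici s = Icc s b := by
      ext u
      simp only [mem_inter_iff, mem_Ioc, mem_Ici, mem_Icc]
      exact ⟨fun h => ⟨h.2, h.1.2⟩, fun h => ⟨⟨hs.1.trans_le h.1, h.2⟩, h.1⟩⟩
    rw [hGs, setIntegral_indicator measurableSet_Ici, hIcc, integral_Icc_eq_integral_Ioc,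
      intervalIntegral.integral_of_le hs.2]
  rw [intervalIntegral.integral_of_le hab, intervalIntegral.integral_of_le hab,
    ← setIntegral_congr_fun measurableSet_Ioc hrow, ← setIntegral_congr_fun measurableSet_Ioc hcol]
  exact integral_integral_swap hG

theorem integral_dotProduct_mulVec_integral {n : Type*} [Fintype n] {M : Matrix n n ℝ}
    (hM : Mᵀ = M) {f : ℝ → n → ℝ} {a b : ℝ} (hab : a ≤ b) (hf : ContinuousOn f (Icc a b)) :
    ∫ t in a..b, f t ⬝ᵥ M *ᵥ ∫ s in a..t, f s
      = 1 / 2 * ((∫ s in a..b, f s) ⬝ᵥ M *ᵥ ∫ s in a..b, f s) := by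
  set F := fun t => ∫ s in a..t, f s
  have hF : ContinuousOn F (Icc a b) := by
    rw [← uIcc_of_le hab]
    exact intervalIntegral.continuousOn_primitive_interval
      (by rw [uIcc_of_le hab]; exact hf.integrableOn_Icc)
  have hderiv : ∀ t ∈ Ioo a b,
      HasDerivAt (fun t => F t ⬝ᵥ M *ᵥ F t) (2 * (f t ⬝ᵥ M *ᵥ F t)) t := fun t ht => by
    have hFt : HasDerivAt F (f t) t :=
      intervalIntegral.integral_hasDerivAt_right
        ((hf.mono (Icc_subset_Icc_right ht.2.le)).intervalIntegrable_of_Icc ht.1.le)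
        ((hf.mono Ioo_subset_Icc_self).stronglyMeasurableAtFilter isOpen_Ioo t ht)
        (hf.continuousAt (Icc_mem_nhds ht.1 ht.2))
    refine (hFt.dotProduct (hFt.mulVec M)).congr_deriv ?_
    rw [← dotProduct_transpose_mulVec M (f t) (F t), hM]
    ring
  have hftc := intervalIntegral.integral_eq_sub_of_hasDerivAt_of_le hab
    (hF.dotProduct_mulVec M hF) hderiv
    (((hf.dotProduct_mulVec M hF).intervalIntegrable_of_Icc hab).const_mul 2)
  rw [intervalIntegral.integral_const_mul] at hftc
  simp only [F, intervalIntegral.integral_same, mulVec_zero, dotProduct_zero, sub_zero] at hftc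
  linarith

section ExpConv

attribute [local instance] Matrix.linftyOpNormedAddCommGroup Matrix.linftyOpNormedRing
  Matrix.linftyOpNormedSpace Matrix.linftyOpNormedAlgebra

variable {n : Type*} [Fintype n]

theorem HasDerivAt.matrix_mulVec_const {A : ℝ → Matrix n n ℝ} {A' : Matrix n n ℝ} {t : ℝ}
    (hA : HasDerivAt A A' t) (x : n → ℝ) : HasDerivAt (fun u => A u *ᵥ x) (A' *ᵥ x) t :=
  hasDerivAt_pi.mpr fun i =>
    HasDerivAt.fun_sum fun j _ => (hasDerivAt_pi.mp (hasDerivAt_pi.mp hA i) j).mul_const (x j)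

variable [DecidableEq n]

theorem integral_mul_exp_sub_smul_mulVec (p : Matrix n n ℝ) (x : n → ℝ) (s t : ℝ) :
    ∫ u in s..t, (p * NormedSpace.exp ((s - u) • p)) *ᵥ x
      = x - NormedSpace.exp ((s - t) • p) *ᵥ x := by
  have hderiv : ∀ u, HasDerivAt (fun u => -(NormedSpace.exp ((s - u) • p) *ᵥ x))
      ((p * NormedSpace.exp ((s - u) • p)) *ᵥ x) u := fun u => by
    have := ((hasDerivAt_exp_smul_const' (𝕂 := ℝ) p (s - u)).scomp u
      ((hasDerivAt_id u).const_sub s)).matrix_mulVec_const x |>.fun_neg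
    simp only [Function.comp_def, neg_smul, one_smul, neg_mulVec, neg_neg] at this
    exact this
  rw [intervalIntegral.integral_eq_sub_of_hasDerivAt (fun u _ => hderiv u)
    (Continuous.intervalIntegrable (by fun_prop) _ _)]
  rw [sub_self, zero_smul, NormedSpace.exp_zero, one_mulVec]
  abel

/-- Duhamel's formula: `expConv p w` solves `v' = w - p v`, `v 0 = 0`. -/
noncomputable def expConv (p : Matrix n n ℝ) (w : ℝ → n → ℝ) (t : ℝ) : n → ℝ :=
  ∫ s in (0:ℝ)..t, NormedSpace.exp ((s - t) • p) *ᵥ w s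

variable {p : Matrix n n ℝ} {w : ℝ → n → ℝ} {T : ℝ}

theorem integrableOn_exp_smul_mulVec (hw : IntegrableOn w (Ioc 0 T)) {f : ℝ → ℝ}
    (hf : Continuous f) : IntegrableOn (fun s => NormedSpace.exp (f s • p) *ᵥ w s) (Ioc 0 T) :=
  hw.continuousOn_mulVec_of_subset (by fun_prop) isCompact_Icc measurableSet_Ioc
    Ioc_subset_Icc_self

theorem expConv_eq_exp_mulVec (hw : IntegrableOn w (Ioc 0 T)) {t : ℝ} (ht : t ∈ Icc 0 T) :
    expConv p w t
      = NormedSpace.exp ((-t) • p) *ᵥ ∫ s in (0:ℝ)..t, NormedSpace.exp (s • p) *ᵥ w s := by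
  have hi : IntervalIntegrable (fun s => NormedSpace.exp (s • p) *ᵥ w s) volume 0 t :=
    (intervalIntegrable_iff_integrableOn_Ioc_of_le ht.1).mpr
      ((integrableOn_exp_smul_mulVec hw continuous_id).mono_set (Ioc_subset_Ioc_right ht.2))
  rw [mulVec_intervalIntegral _ hi, expConv]
  refine intervalIntegral.integral_congr fun s _ => ?_
  rw [mulVec_mulVec,
    ← Matrix.exp_add_of_commute _ _ ((Commute.refl p).smul_left _ |>.smul_right _),
    ← add_smul, neg_add_eq_sub]

theorem continuousOn_expConv (hw : IntegrableOn w (Ioc 0 T)) :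
    ContinuousOn (expConv p w) (Icc 0 T) := by
  rcases lt_or_ge T 0 with hT | hT
  · simp [Icc_eq_empty_of_lt hT]
  have hprim : ContinuousOn (fun t => ∫ s in (0:ℝ)..t, NormedSpace.exp (s • p) *ᵥ w s)
      (Icc 0 T) := by
    rw [← uIcc_of_le hT]
    exact intervalIntegral.continuousOn_primitive_interval
      (by rw [uIcc_of_le hT, integrableOn_Icc_iff_integrableOn_Ioc]
          exact integrableOn_exp_smul_mulVec hw continuous_id)
  have hexp : Continuous fun t : ℝ => NormedSpace.exp ((-t) • p) := by fun_prop
  exact ((continuous_fst.matrix_mulVec continuous_snd).comp_continuousOn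
    (hexp.continuousOn.prodMk hprim)).congr fun t ht => expConv_eq_exp_mulVec hw ht

theorem expConv_add_mulVec_integral_expConv (hT : 0 ≤ T) (hw : IntegrableOn w (Ioc 0 T)) :
    expConv p w T + p *ᵥ ∫ u in (0:ℝ)..T, expConv p w u = ∫ s in (0:ℝ)..T, w s := by
  set f : ℝ → ℝ → n → ℝ := fun u s => (p * NormedSpace.exp ((s - u) • p)) *ᵥ w s
  have hf : IntegrableOn (Function.uncurry f) (Ioc 0 T ×ˢ Ioc 0 T) := by
    have := isFiniteMeasure_restrict.mpr (measure_Ioc_lt_top (μ := volume) (a := 0) (b := T)).ne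
    have hw₂ : IntegrableOn (fun z : ℝ × ℝ => w z.2) (Ioc 0 T ×ˢ Ioc 0 T) := by
      rw [IntegrableOn, Measure.volume_eq_prod, ← Measure.prod_restrict]
      exact hw.comp_snd _
    exact hw₂.continuousOn_mulVec_of_subset (K := Icc 0 T ×ˢ Icc 0 T) (by fun_prop)
      (isCompact_Icc.prod isCompact_Icc) (measurableSet_Ioc.prod measurableSet_Ioc)
      (prod_mono Ioc_subset_Icc_self Ioc_subset_Icc_self)
  have hrow : ∀ u ∈ uIcc 0 T, p *ᵥ expConv p w u = ∫ s in (0:ℝ)..u, f u s := fun u hu => by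
    rw [uIcc_of_le hT] at hu
    rw [expConv, mulVec_intervalIntegral _ ((intervalIntegrable_iff_integrableOn_Ioc_of_le hu.1).mpr
      ((integrableOn_exp_smul_mulVec hw (continuous_sub_right u)).mono_set
        (Ioc_subset_Ioc_right hu.2)))]
    simp_rw [f, mulVec_mulVec]
  have hcol : ∀ s, ∫ u in s..T, f u s = w s - NormedSpace.exp ((s - T) • p) *ᵥ w s :=
    fun s => integral_mul_exp_sub_smul_mulVec p (w s) s T
  rw [mulVec_intervalIntegral _ ((continuousOn_expConv hw).intervalIntegrable_of_Icc hT),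
    intervalIntegral.integral_congr hrow, intervalIntegral.integral_integral_swap_triangle hT hf]
  simp_rw [hcol]
  rw [intervalIntegral.integral_sub
    ((intervalIntegrable_iff_integrableOn_Ioc_of_le hT).mpr hw)
    ((intervalIntegrable_iff_integrableOn_Ioc_of_le hT).mpr
      (integrableOn_exp_smul_mulVec hw (continuous_sub_right T))),
    expConv]
  abel

end ExpConv

theorem Matrix.PosSemidef.transpose_eq {n : Type*} [Fintype n] {A : Matrix n n ℝ}
    (hA : A.PosSemidef) : Aᵀ = A := by
  rw [← conjTranspose_eq_transpose_of_trivial]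
  exact hA.isHermitian

section PseudoInverse

variable {n : Type*} [Fintype n] {p h g : Matrix n n ℝ}

theorem mulVec_dotProduct_mul_mulVec_eq (hh : hᵀ = h) (hc : p * h = h * p) (hg : h * g * h = h)
    (v : n → ℝ) : h *ᵥ v ⬝ᵥ (p * g) *ᵥ (h *ᵥ v) = v ⬝ᵥ (p * h) *ᵥ v := by
  have hphg : h * (p * g * h) = p * h :=
    calc h * (p * g * h) = h * p * g * h := by simp only [mul_assoc]
      _ = p * (h * g * h) := by rw [← hc]; simp only [mul_assoc]
      _ = p * h := by rw [hg]
  rw [mulVec_mulVec, mulVec_dotProduct_mulVec, hh, hphg]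

theorem mulVec_dotProduct_mul_mulVec_nonneg [DecidableEq n] (hp : p.PosSemidef)
    (hh : h.PosSemidef) (hc : p * h = h * p) (hg : h * g * h = h) (v : n → ℝ) :
    0 ≤ h *ᵥ v ⬝ᵥ (p * g) *ᵥ (h *ᵥ v) := by
  rw [mulVec_dotProduct_mul_mulVec_eq hh.transpose_eq hc hg]
  simpa only [star_trivial] using
    (Commute.mul_nonneg hp.nonneg hh.nonneg hc).posSemidef.dotProduct_mulVec_nonneg v

theorem mulVec_dotProduct_mulVec_add (hh : hᵀ = h) (hc : p * h = h * p) (hg : h * g * h = h)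
    (v u : n → ℝ) :
    h *ᵥ v ⬝ᵥ p *ᵥ (v + p *ᵥ u)
      = h *ᵥ v ⬝ᵥ (p * g) *ᵥ (h *ᵥ v) + v ⬝ᵥ (p * h * p) *ᵥ u := by
  rw [mulVec_dotProduct_mul_mulVec_eq hh hc hg, mulVec_add, dotProduct_add, mulVec_mulVec,
    mulVec_dotProduct_mulVec, mulVec_dotProduct_mulVec, hh, hc, mul_assoc]

theorem mulVec_mulVec_dotProduct_mulVec (hp : pᵀ = p) (hh : hᵀ = h) (hc : p * h = h * p)
    (hg : h * g * h = h) (u : n → ℝ) :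
    p *ᵥ (h *ᵥ u) ⬝ᵥ g *ᵥ (p *ᵥ (h *ᵥ u)) = u ⬝ᵥ (p * h * p) *ᵥ u := by
  have hphgph : h * p * (g * (p * h)) = p * h * p :=
    calc h * p * (g * (p * h)) = p * h * (g * (h * p)) := by rw [hc]
      _ = p * (h * g * h) * p := by simp only [mul_assoc]
      _ = p * h * p := by rw [hg]
  rw [mulVec_mulVec, mulVec_mulVec, mulVec_dotProduct_mulVec, transpose_mul, hp, hh, hphgph]

theorem integral_mulVec_dotProduct_mulVec_eq_add_half (hp : pᵀ = p) (hh : hᵀ = h)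
    (hc : p * h = h * p) (hg : h * g * h = h) {T : ℝ} (hT : 0 ≤ T) {v Q : ℝ → n → ℝ}
    (hv : ContinuousOn v (Icc 0 T))
    (hQ : ∀ t ∈ Icc 0 T, Q t = v t + p *ᵥ ∫ s in (0:ℝ)..t, v s) :
    ∫ t in (0:ℝ)..T, h *ᵥ v t ⬝ᵥ p *ᵥ Q t
      = (∫ t in (0:ℝ)..T, h *ᵥ v t ⬝ᵥ (p * g) *ᵥ (h *ᵥ v t))
        + 1 / 2 * ((∫ t in (0:ℝ)..T, v t) ⬝ᵥ (p * h * p) *ᵥ ∫ t in (0:ℝ)..T, v t) := by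
  have hhv : ContinuousOn (fun t => h *ᵥ v t) (Icc 0 T) :=
    (continuous_const.matrix_mulVec continuous_id).comp_continuousOn hv
  have hU : ContinuousOn (fun t => ∫ s in (0:ℝ)..t, v s) (Icc 0 T) := by
    rw [← uIcc_of_le hT]
    exact intervalIntegral.continuousOn_primitive_interval
      (by rw [uIcc_of_le hT]; exact hv.integrableOn_Icc)
  have hphp : (p * h * p)ᵀ = p * h * p := by
    rw [transpose_mul, transpose_mul, hp, hh, mul_assoc]
  rw [← integral_dotProduct_mulVec_integral hphp hT hv, ← intervalIntegral.integral_add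
      ((hhv.dotProduct_mulVec _ hhv).intervalIntegrable_of_Icc hT)
      ((hv.dotProduct_mulVec _ hU).intervalIntegrable_of_Icc hT)]
  refine intervalIntegral.integral_congr fun t ht => ?_
  rw [uIcc_of_le hT] at ht
  simp only [hQ t ht, mulVec_dotProduct_mulVec_add hh hc hg]

end PseudoInverse

theorem stmt5_general {K : ℕ} (T : ℝ) (hT : 0 ≤ T)
    (p h : Matrix (Fin K) (Fin K) ℝ)
    (hp : p.PosSemidef) (hh : h.PosSemidef)
    (hcomm : p * h = h * p)
    (g : Matrix (Fin K) (Fin K) ℝ)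
    (hg1 : h * g * h = h)
    (w : ℝ → Fin K → ℝ)
    (hw : MemLp w 2 (volume.restrict (Set.Ioc (0:ℝ) T)))
    (Y Q : ℝ → Fin K → ℝ)
    (hY : ∀ t, Y t = h.mulVec (∫ s in (0:ℝ)..t, (NormedSpace.exp ((s - t) • p)).mulVec (w s)))
    (hQ : ∀ t, Q t = ∫ s in (0:ℝ)..t, w s) :
    (∫ t in (0:ℝ)..T, (Y t) ⬝ᵥ p.mulVec (Q t))
      = (∫ t in (0:ℝ)..T, (Y t) ⬝ᵥ (p * g).mulVec (Y t))
        + (1/2) * ((p.mulVec (∫ t in (0:ℝ)..T, Y t)) ⬝ᵥ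
            g.mulVec (p.mulVec (∫ t in (0:ℝ)..T, Y t)))
    ∧ 0 ≤ ∫ t in (0:ℝ)..T, (Y t) ⬝ᵥ p.mulVec (Q t) := by
  have hw₁ : IntegrableOn w (Ioc 0 T) := hw.integrable one_le_two
  have hv : ContinuousOn (expConv p w) (Icc 0 T) := continuousOn_expConv hw₁
  have hQv (t) (ht : t ∈ Icc 0 T) : Q t = expConv p w t + p *ᵥ ∫ s in (0:ℝ)..t, expConv p w s := by
    rw [hQ, expConv_add_mulVec_integral_expConv ht.1 (hw₁.mono_set (Ioc_subset_Ioc_right ht.2))]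
  obtain rfl : Y = fun t => h *ᵥ expConv p w t := funext hY
  have hidentity := integral_mulVec_dotProduct_mulVec_eq_add_half hp.transpose_eq
    hh.transpose_eq hcomm hg1 hT hv hQv
  rw [← mulVec_intervalIntegral _ (hv.intervalIntegrable_of_Icc hT),
    mulVec_mulVec_dotProduct_mulVec hp.transpose_eq hh.transpose_eq hcomm hg1]
  refine ⟨hidentity, hidentity ▸ add_nonneg ?_ (mul_nonneg (by norm_num) ?_)⟩
  · exact intervalIntegral.integral_nonneg hT fun t _ =>
      mulVec_dotProduct_mul_mulVec_nonneg hp hh hcomm hg1 _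
  · simpa only [hp.isHermitian.eq, star_trivial] using
      (hh.conjTranspose_mul_mul_same p).dotProduct_mulVec_nonneg _

/-- For commuting symmetric PSD matrices `p, h` with Moore–Penrose
pseudoinverse `g = h†`, `Y_t = h ∫_0^t e^{(s-t)p} w_s ds` and `Q_t = ∫_0^t w_s ds`,
one has
`∫_0^T Yᵀ p Q = ∫_0^T Yᵀ p h† Y + (1/2)(p∫_0^T Y)ᵀ h† (p∫_0^T Y) ≥ 0`. -/
theorem stmt5 {K : ℕ} (T : ℝ) (hT : 0 ≤ T)
    (p h : Matrix (Fin K) (Fin K) ℝ)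
    (hps : p.IsSymm) (hhs : h.IsSymm) (hp : p.PosSemidef) (hh : h.PosSemidef)
    (hcomm : p * h = h * p)
    (g : Matrix (Fin K) (Fin K) ℝ)
    (hg1 : h * g * h = h) (hg2 : g * h * g = g)
    (hg3 : (h * g)ᵀ = h * g) (hg4 : (g * h)ᵀ = g * h)
    (w : ℝ → Fin K → ℝ)
    (hw : MemLp w 2 (volume.restrict (Set.Ioc (0:ℝ) T)))
    (Y Q : ℝ → Fin K → ℝ)
    (hY : ∀ t, Y t = h.mulVec (∫ s in (0:ℝ)..t, (NormedSpace.exp ((s - t) • p)).mulVec (w s)))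
    (hQ : ∀ t, Q t = ∫ s in (0:ℝ)..t, w s) :
    (∫ t in (0:ℝ)..T, (Y t) ⬝ᵥ p.mulVec (Q t))
      = (∫ t in (0:ℝ)..T, (Y t) ⬝ᵥ (p * g).mulVec (Y t))
        + (1/2) * ((p.mulVec (∫ t in (0:ℝ)..T, Y t)) ⬝ᵥ
            g.mulVec (p.mulVec (∫ t in (0:ℝ)..T, Y t)))
    ∧ 0 ≤ ∫ t in (0:ℝ)..T, (Y t) ⬝ᵥ p.mulVec (Q t) :=
  stmt5_general T hT p h hp hh hcomm g hg1 w hw Y Q hY hQ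
end

section
/- The quadratic-penalized control functional is strictly concave along mixtures: for Q^{I,η}_t = q + ∫_0^t η_s ds, positive semi-definite matrices ψ, r, b (with b positive definite), and η, κ ∈ L²(Ω × [0,T]; ℝ^K), ρ ∈ (0,1), one has J(ρη + (1-ρ)κ) - ρJ(η) - (1-ρ)J(κ) = ρ(1-ρ)( E∫_0^T (η_t-κ_t)^⊤ b (η_t-κ_t) dt + E[(Q^{I,η}_T - Q^{I,κ}_T)^⊤ ψ (Q^{I,η}_T - Q^{I,κ}_T)] + E∫_0^T (Q^{I,η}_t - Q^{I,κ}_t)^⊤ r (Q^{I,η}_t - Q^{I,κ}_t) dt ), where J(η) := E[∫_0^T { -η_t^⊤ b η_t + (A_t - 2ψη_t - r Q^{I,η}_t)^⊤ Q^{I,η}_t } dt] for a fixed process A ∈ L²(Ω × [0,T]; ℝ^K). In particular, J is concave. -/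
/-!
Pointwise in `(t, ω)` the integrand of `J` is a quadratic polynomial in the pair
(control, inventory), and inventory is affine in the control. The linear term `Aᵀ Q` therefore
drops out of the concavity defect, which equals `ρ (1 - ρ) (eᵀ b e + 2 Xᵀ ψ e + Xᵀ r X)`
integrated over `(0, T] × Ω`, where `e = η - κ` and `X_t = ∫_0^t e = Q^{I,η}_t - Q^{I,κ}_t`.
Pathwise, `2 ∫_0^T X_tᵀ ψ e_t dt = X_Tᵀ ψ X_T`: by Fubini, the integral of `e_sᵀ ψ e_t` over the
square `(0, T]²` is the sum of the integrals over the two triangles cut out by the diagonal, and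
these agree because `ψ` is symmetric.

All terms are integrable because the running integral of a control in `L²((0, T] × Ω)` is again
in that space, by Cauchy–Schwarz: `‖∫_0^t ξ_s ds‖² ≤ T ∫_0^T ‖ξ_s‖² ds`.
-/

open Matrix MeasureTheory Set

section Fubini

variable {α β E : Type*} [MeasurableSpace α] [MeasurableSpace β] [NormedAddCommGroup E]

lemma sq_integral_norm_le {μ : Measure α} [IsFiniteMeasure μ] {f : α → E} (hf : MemLp f 2 μ) :
    (∫ x, ‖f x‖ ∂μ) ^ 2 ≤ μ.real univ * ∫ x, ‖f x‖ ^ 2 ∂μ := by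
  have h := integral_mul_le_Lp_mul_Lq_of_nonneg Real.HolderConjugate.two_two
    (.of_forall fun x => norm_nonneg (f x)) (.of_forall fun _ => zero_le_one)
    (by simpa using hf.norm) (memLp_const (1 : ℝ))
  simp only [mul_one, one_pow, integral_const, smul_eq_mul, Real.rpow_two] at h
  rw [← Real.sqrt_eq_rpow, ← Real.sqrt_eq_rpow] at h
  calc (∫ x, ‖f x‖ ∂μ) ^ 2 ≤ (√(∫ x, ‖f x‖ ^ 2 ∂μ) * √(μ.real univ)) ^ 2 :=
        pow_le_pow_left₀ (integral_nonneg fun _ => norm_nonneg _) h 2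
    _ = μ.real univ * ∫ x, ‖f x‖ ^ 2 ∂μ := by
        rw [mul_pow, Real.sq_sqrt (integral_nonneg fun _ => by positivity),
          Real.sq_sqrt measureReal_nonneg, mul_comm]

variable [NormedSpace ℝ E]

lemma memLp_two_integral_prod_right {μ : Measure α} {ν : Measure β} [IsFiniteMeasure μ]
    [SFinite ν] {f : α × β → E} (hf : MemLp f 2 (μ.prod ν)) :
    MemLp (fun y => ∫ x, f (x, y) ∂μ) 2 ν := by
  have hsq : Integrable (fun z => ‖f z‖ ^ 2) (μ.prod ν) :=
    (memLp_two_iff_integrable_sq_norm hf.1).1 hf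
  have hmeas := hf.1.prod_swap.integral_prod_right'
  refine (memLp_two_iff_integrable_sq_norm hmeas).2 <|
    (hsq.integral_prod_right.const_mul (μ.real univ)).mono' (hmeas.norm.pow 2) ?_
  filter_upwards [hf.1.prod_swap.prodMk_left, hsq.prod_left_ae] with y hy hy2
  have hslice : MemLp (fun x => f (x, y)) 2 μ := (memLp_two_iff_integrable_sq_norm hy).2 hy2
  rw [Real.norm_of_nonneg (by positivity)]
  calc ‖∫ x, f (x, y) ∂μ‖ ^ 2 ≤ (∫ x, ‖f (x, y)‖ ∂μ) ^ 2 :=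
        pow_le_pow_left₀ (norm_nonneg _) (norm_integral_le_integral_norm _) 2
    _ ≤ μ.real univ * ∫ x, ‖f (x, y)‖ ^ 2 ∂μ := sq_integral_norm_le hslice

end Fubini

section RunningIntegral

variable {Ω E : Type*} [MeasurableSpace Ω] [NormedAddCommGroup E] [NormedSpace ℝ E]

lemma aestronglyMeasurable_setIntegral_Iic {ν : Measure ℝ} {μ : Measure Ω} [SFinite ν]
    [SFinite μ] {f : ℝ × Ω → E} (hf : AEStronglyMeasurable f (ν.prod μ)) :
    AEStronglyMeasurable (fun p : ℝ × Ω => ∫ s in Iic p.1, f (s, p.2) ∂ν) (ν.prod μ) := by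
  have hφ : Measure.QuasiMeasurePreserving (fun z : (ℝ × Ω) × ℝ => (z.2, z.1.2))
      ((ν.prod μ).prod ν) (ν.prod μ) :=
    Measure.measurePreserving_swap.quasiMeasurePreserving.comp
      (QuasiMeasurePreserving.prodMap Measure.quasiMeasurePreserving_snd
        (Measure.QuasiMeasurePreserving.id ν))
  refine (((hf.comp_quasiMeasurePreserving hφ).indicator
    (measurableSet_le measurable_snd measurable_fst.fst)).integral_prod_right').congr
    (.of_forall fun p => ?_)
  change _ = ∫ s in Iic p.1, f (s, p.2) ∂ν
  rw [← integral_indicator measurableSet_Iic]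
  rfl

lemma memLp_two_setIntegral_Iic {ν : Measure ℝ} {μ : Measure Ω} [IsFiniteMeasure ν]
    [IsFiniteMeasure μ] {f : ℝ × Ω → E} (hf : MemLp f 2 (ν.prod μ)) :
    MemLp (fun p : ℝ × Ω => ∫ s in Iic p.1, f (s, p.2) ∂ν) 2 (ν.prod μ) := by
  refine ((memLp_two_integral_prod_right hf.norm).comp_snd ν).of_le
    (aestronglyMeasurable_setIntegral_Iic hf.1) ?_
  filter_upwards [Measure.quasiMeasurePreserving_snd.ae
    (hf.integrable one_le_two).prod_left_ae] with p hp
  calc ‖∫ s in Iic p.1, f (s, p.2) ∂ν‖ ≤ ∫ s in Iic p.1, ‖f (s, p.2)‖ ∂ν :=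
        norm_integral_le_integral_norm _
    _ ≤ ∫ s, ‖f (s, p.2)‖ ∂ν :=
        setIntegral_le_integral hp.norm (.of_forall fun _ => norm_nonneg _)
    _ ≤ ‖∫ s, ‖f (s, p.2)‖ ∂ν‖ := Real.le_norm_self _

lemma two_mul_integral_setIntegral_Iic [CompleteSpace E] {ν : Measure ℝ} [SFinite ν]
    [NullSingletonClass ν] (B : E →L[ℝ] E →L[ℝ] ℝ) (hB : ∀ x y, B x y = B y x) {e : ℝ → E}
    (he : Integrable e ν) :
    2 * ∫ t, B (∫ s in Iic t, e s ∂ν) (e t) ∂ν = B (∫ t, e t ∂ν) (∫ t, e t ∂ν) := by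
  set c : ℝ × ℝ → ℝ := fun z => B (e z.1) (e z.2)
  have hc : Integrable c (ν.prod ν) := he.op_fst_snd (by fun_prop) ⟨‖B‖, B.le_opNorm₂⟩ he
  have hS : MeasurableSet {z : ℝ × ℝ | z.1 ≤ z.2} := measurableSet_le measurable_fst measurable_snd
  have hS' : MeasurableSet {z : ℝ × ℝ | z.2 < z.1} := measurableSet_lt measurable_snd measurable_fst
  have h_le : ∫ z in {z : ℝ × ℝ | z.1 ≤ z.2}, c z ∂(ν.prod ν)
      = ∫ t, B (∫ s in Iic t, e s ∂ν) (e t) ∂ν := by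
    rw [← integral_indicator hS, integral_prod_symm _ (hc.indicator hS)]
    refine integral_congr_ae (.of_forall fun t => ?_)
    change ∫ s, (Iic t).indicator (fun s => B.flip (e t) (e s)) s ∂ν = _
    rw [integral_indicator measurableSet_Iic, (B.flip (e t)).integral_comp_comm he.integrableOn]
    rfl
  have h_gt : ∫ z in {z : ℝ × ℝ | z.1 ≤ z.2}ᶜ, c z ∂(ν.prod ν)
      = ∫ t, B (∫ s in Iio t, e s ∂ν) (e t) ∂ν := by
    simp only [compl_ofPred, not_le]
    rw [← integral_indicator hS', integral_prod _ (hc.indicator hS')]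
    refine integral_congr_ae (.of_forall fun t => ?_)
    change ∫ s, (Iio t).indicator (fun s => B (e t) (e s)) s ∂ν = _
    rw [integral_indicator measurableSet_Iio, (B (e t)).integral_comp_comm he.integrableOn, hB]
  rw [two_mul]
  nth_rewrite 2 [integral_congr_ae (.of_forall fun t => by rw [integral_Iic_eq_integral_Iio])]
  rw [← h_le, ← h_gt, integral_add_compl hS hc, integral_prod_bilin B he he]

lemma intervalIntegral_eq_setIntegral_Iic {f : ℝ → E} {t T : ℝ} (ht : 0 ≤ t) (htT : t ≤ T) :
    ∫ s in 0..t, f s = ∫ s in Iic t, f s ∂(volume.restrict (Ioc 0 T)) := by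
  rw [intervalIntegral.integral_of_le ht, Measure.restrict_restrict measurableSet_Iic,
    Iic_inter_Ioc_of_le htT]

lemma integral_intervalIntegral_eq_integral_restrict {μ : Measure Ω} {T : ℝ} (hT : 0 ≤ T)
    {F G : ℝ → Ω → ℝ} (h : ∀ ω, ∀ t ∈ Ioc 0 T, F t ω = G t ω) :
    ∫ ω, (∫ t in 0..T, F t ω) ∂μ = ∫ ω, ∫ t, G t ω ∂(volume.restrict (Ioc 0 T)) ∂μ := by
  congr 1 with ω
  rw [intervalIntegral.integral_of_le hT]
  exact setIntegral_congr_fun measurableSet_Ioc (h ω)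

end RunningIntegral

namespace Matrix

variable {n : Type*} [Fintype n]

lemma IsSymm.dotProduct_mulVec_comm {M : Matrix n n ℝ} (hM : M.IsSymm) (x y : n → ℝ) :
    x ⬝ᵥ M *ᵥ y = y ⬝ᵥ M *ᵥ x := by
  rw [dotProduct_mulVec, ← mulVec_transpose, hM.eq, dotProduct_comm]

variable [DecidableEq n]

noncomputable def toContinuousLinearMap₂' (M : Matrix n n ℝ) :
    (n → ℝ) →L[ℝ] (n → ℝ) →L[ℝ] ℝ :=
  (toLinearMap₂' ℝ M).toContinuousBilinearMap

@[simp]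
lemma toContinuousLinearMap₂'_apply (M : Matrix n n ℝ) (x y : n → ℝ) :
    M.toContinuousLinearMap₂' x y = x ⬝ᵥ M *ᵥ y :=
  toLinearMap₂'_apply' M x y

lemma integrable_dotProduct_mulVec {α : Type*} [MeasurableSpace α] {μ : Measure α}
    (M : Matrix n n ℝ) {f g : α → n → ℝ} (hf : MemLp f 2 μ) (hg : MemLp g 2 μ) :
    Integrable (fun x => f x ⬝ᵥ M *ᵥ g x) μ := by
  simpa using memLp_one_iff_integrable.1 (M.toContinuousLinearMap₂'.memLp_of_bilin 1 hf hg)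

end Matrix

section Control

variable {Ω : Type*} {n : Type*} [Fintype n]

def runningReward (ψ r b : Matrix n n ℝ) (a u x : n → ℝ) : ℝ :=
  -(u ⬝ᵥ b *ᵥ u) + (a - (2 : ℝ) • ψ *ᵥ u - r *ᵥ x) ⬝ᵥ x

lemma runningReward_mix (ψ r b : Matrix n n ℝ) (a u v x y : n → ℝ) (ρ : ℝ) :
    runningReward ψ r b a (ρ • u + (1 - ρ) • v) (ρ • x + (1 - ρ) • y)
        - ρ * runningReward ψ r b a u x - (1 - ρ) * runningReward ψ r b a v y
      = ρ * (1 - ρ) * ((u - v) ⬝ᵥ b *ᵥ (u - v) + 2 * ((x - y) ⬝ᵥ ψ *ᵥ (u - v))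
          + (x - y) ⬝ᵥ r *ᵥ (x - y)) := by
  simp only [runningReward, mulVec_add, mulVec_smul, mulVec_sub, dotProduct_add, add_dotProduct,
    sub_dotProduct, dotProduct_sub, smul_dotProduct, dotProduct_smul, smul_eq_mul,
    dotProduct_comm (ψ *ᵥ _), dotProduct_comm (r *ᵥ _)]
  ring

/-- The paper's `Q^{I,ξ}_t = q + ∫_0^t ξ_s ds`, with time integrals taken against a measure `ν`;
for `ν = volume.restrict (Ioc 0 T)` and `0 ≤ t ≤ T` the set `Iic t` contributes `(0, t]`. -/
noncomputable def inventory (ν : Measure ℝ) (q : Ω → n → ℝ) (ξ : ℝ → Ω → n → ℝ) (t : ℝ)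
    (ω : Ω) : n → ℝ :=
  q ω + ∫ s in Iic t, ξ s ω ∂ν

noncomputable def terminalInventory (ν : Measure ℝ) (q : Ω → n → ℝ) (ξ : ℝ → Ω → n → ℝ)
    (ω : Ω) : n → ℝ :=
  q ω + ∫ s, ξ s ω ∂ν

variable {ν : Measure ℝ} {q : Ω → n → ℝ} {η κ : ℝ → Ω → n → ℝ}

section Pathwise

variable {ω : Ω} (hη : Integrable (η · ω) ν) (hκ : Integrable (κ · ω) ν)
include hη hκ

lemma inventory_mix (ρ t : ℝ) :
    inventory ν q (fun t ω => ρ • η t ω + (1 - ρ) • κ t ω) t ω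
      = ρ • inventory ν q η t ω + (1 - ρ) • inventory ν q κ t ω := by
  simp only [inventory]
  rw [integral_add (f := fun s => ρ • η s ω) (g := fun s => (1 - ρ) • κ s ω)
    (hη.integrableOn.smul ρ) (hκ.integrableOn.smul (1 - ρ)), integral_smul, integral_smul]
  module

lemma inventory_sub (t : ℝ) :
    inventory ν q η t ω - inventory ν q κ t ω = ∫ s in Iic t, (η s ω - κ s ω) ∂ν := by
  rw [inventory, inventory, integral_sub hη.integrableOn hκ.integrableOn]
  abel

lemma terminalInventory_sub :
    terminalInventory ν q η ω - terminalInventory ν q κ ω = ∫ s, (η s ω - κ s ω) ∂ν := by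
  rw [terminalInventory, terminalInventory, integral_sub hη hκ]
  abel

lemma two_mul_integral_inventory_sub [DecidableEq n] [SFinite ν] [NullSingletonClass ν]
    {ψ : Matrix n n ℝ} (hψs : ψ.IsSymm) :
    2 * ∫ t, (inventory ν q η t ω - inventory ν q κ t ω) ⬝ᵥ ψ *ᵥ (η t ω - κ t ω) ∂ν
      = (terminalInventory ν q η ω - terminalInventory ν q κ ω)
          ⬝ᵥ ψ *ᵥ (terminalInventory ν q η ω - terminalInventory ν q κ ω) := by
  simp only [inventory_sub hη hκ, terminalInventory_sub hη hκ]
  simpa using two_mul_integral_setIntegral_Iic ψ.toContinuousLinearMap₂'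
    (by simpa using hψs.dotProduct_mulVec_comm) (hη.sub hκ)

end Pathwise

variable [MeasurableSpace Ω] {μ : Measure Ω}

noncomputable def objective (μ : Measure Ω) (ν : Measure ℝ) (ψ r b : Matrix n n ℝ)
    (A : ℝ → Ω → n → ℝ) (q : Ω → n → ℝ) (ξ : ℝ → Ω → n → ℝ) : ℝ :=
  ∫ ω, ∫ t, runningReward ψ r b (A t ω) (ξ t ω) (inventory ν q ξ t ω) ∂ν ∂μ

lemma memLp_inventory [IsFiniteMeasure ν] [IsFiniteMeasure μ] {ξ : ℝ → Ω → n → ℝ}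
    (hq : MemLp q 2 μ) (hξ : MemLp (Function.uncurry ξ) 2 (ν.prod μ)) :
    MemLp (Function.uncurry (inventory ν q ξ)) 2 (ν.prod μ) :=
  (hq.comp_snd ν).add (memLp_two_setIntegral_Iic hξ)

variable [DecidableEq n]

lemma integrable_runningReward {α : Type*} [MeasurableSpace α] {μ : Measure α}
    (ψ r b : Matrix n n ℝ) {a u x : α → n → ℝ} (ha : MemLp a 2 μ) (hu : MemLp u 2 μ)
    (hx : MemLp x 2 μ) :
    Integrable (fun z => runningReward ψ r b (a z) (u z) (x z)) μ := by
  have h := ((integrable_dotProduct_mulVec b hu hu).neg.add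
    (integrable_dotProduct_mulVec 1 ha hx)).sub
      ((integrable_dotProduct_mulVec ψ hx hu).const_mul 2) |>.sub
      (integrable_dotProduct_mulVec r hx hx)
  refine h.congr (.of_forall fun z => ?_)
  simp only [runningReward, Pi.add_apply, Pi.sub_apply, Pi.neg_apply, sub_dotProduct,
    smul_dotProduct, one_mulVec, smul_eq_mul, dotProduct_comm (ψ *ᵥ _), dotProduct_comm (r *ᵥ _)]
  ring

variable [IsFiniteMeasure ν] [NullSingletonClass ν] [IsFiniteMeasure μ] {ψ r b : Matrix n n ℝ}
  {A : ℝ → Ω → n → ℝ} (hq : MemLp q 2 μ) (hA : MemLp (Function.uncurry A) 2 (ν.prod μ))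
  (hη : MemLp (Function.uncurry η) 2 (ν.prod μ)) (hκ : MemLp (Function.uncurry κ) 2 (ν.prod μ))
include hq hA hη hκ

theorem objective_mix_sub (hψs : ψ.IsSymm) (ρ : ℝ) :
    objective μ ν ψ r b A q (fun t ω => ρ • η t ω + (1 - ρ) • κ t ω)
        - ρ * objective μ ν ψ r b A q η - (1 - ρ) * objective μ ν ψ r b A q κ
      = ρ * (1 - ρ) *
        ((∫ ω, ∫ t, (η t ω - κ t ω) ⬝ᵥ b *ᵥ (η t ω - κ t ω) ∂ν ∂μ)
          + (∫ ω, (terminalInventory ν q η ω - terminalInventory ν q κ ω)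
              ⬝ᵥ ψ *ᵥ (terminalInventory ν q η ω - terminalInventory ν q κ ω) ∂μ)
          + ∫ ω, ∫ t, (inventory ν q η t ω - inventory ν q κ t ω)
              ⬝ᵥ r *ᵥ (inventory ν q η t ω - inventory ν q κ t ω) ∂ν ∂μ) := by
  set m : ℝ → Ω → n → ℝ := fun t ω => ρ • η t ω + (1 - ρ) • κ t ω
  set R : (ℝ → Ω → n → ℝ) → ℝ × Ω → ℝ := fun ξ p =>
    runningReward ψ r b (A p.1 p.2) (ξ p.1 p.2) (inventory ν q ξ p.1 p.2)
  set e : ℝ × Ω → n → ℝ := fun p => η p.1 p.2 - κ p.1 p.2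
  set Δ : ℝ × Ω → n → ℝ := fun p => inventory ν q η p.1 p.2 - inventory ν q κ p.1 p.2
  have hR (ξ) (hξ : MemLp (Function.uncurry ξ) 2 (ν.prod μ)) : Integrable (R ξ) (ν.prod μ) :=
    integrable_runningReward ψ r b hA hξ (memLp_inventory hq hξ)
  have hobj (ξ) (hξ : MemLp (Function.uncurry ξ) 2 (ν.prod μ)) :
      objective μ ν ψ r b A q ξ = ∫ p, R ξ p ∂(ν.prod μ) :=
    (integral_prod_symm _ (hR ξ hξ)).symm
  have hm : MemLp (Function.uncurry m) 2 (ν.prod μ) :=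
    (hη.const_smul ρ).add (hκ.const_smul (1 - ρ))
  have he : MemLp e 2 (ν.prod μ) := hη.sub hκ
  have hΔ : MemLp Δ 2 (ν.prod μ) := (memLp_inventory hq hη).sub (memLp_inventory hq hκ)
  have hbInt := integrable_dotProduct_mulVec b he he
  have hψInt := integrable_dotProduct_mulVec ψ hΔ he
  have hrInt := integrable_dotProduct_mulVec r hΔ hΔ
  have hslice : ∀ᵐ ω ∂μ, Integrable (η · ω) ν ∧ Integrable (κ · ω) ν :=
    (hη.integrable one_le_two).prod_left_ae.and (hκ.integrable one_le_two).prod_left_ae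
  have hpt : ∀ᵐ p ∂(ν.prod μ), R m p - ρ * R η p - (1 - ρ) * R κ p
      = ρ * (1 - ρ) * (e p ⬝ᵥ b *ᵥ e p + 2 * (Δ p ⬝ᵥ ψ *ᵥ e p) + Δ p ⬝ᵥ r *ᵥ Δ p) := by
    filter_upwards [Measure.quasiMeasurePreserving_snd.ae hslice] with p hp
    simp only [R, m, inventory_mix hp.1 hp.2]
    exact runningReward_mix ψ r b _ _ _ _ _ ρ
  have hterm : ∀ᵐ ω ∂μ, 2 * ∫ t, Δ (t, ω) ⬝ᵥ ψ *ᵥ e (t, ω) ∂ν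
      = (terminalInventory ν q η ω - terminalInventory ν q κ ω)
          ⬝ᵥ ψ *ᵥ (terminalInventory ν q η ω - terminalInventory ν q κ ω) := by
    filter_upwards [hslice] with ω hω
    exact two_mul_integral_inventory_sub hω.1 hω.2 hψs
  calc _ = ∫ p, (R m p - ρ * R η p - (1 - ρ) * R κ p) ∂(ν.prod μ) := by
        rw [hobj m hm, hobj η hη, hobj κ hκ, ← integral_const_mul, ← integral_const_mul,
          ← integral_sub (hR m hm) ((hR η hη).const_mul ρ),
          ← integral_sub (by exact (hR m hm).sub ((hR η hη).const_mul ρ))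
            ((hR κ hκ).const_mul _)]
    _ = ρ * (1 - ρ) * ((∫ p, e p ⬝ᵥ b *ᵥ e p ∂(ν.prod μ))
          + (∫ ω, 2 * ∫ t, Δ (t, ω) ⬝ᵥ ψ *ᵥ e (t, ω) ∂ν ∂μ)
          + ∫ p, Δ p ⬝ᵥ r *ᵥ Δ p ∂(ν.prod μ)) := by
        rw [integral_congr_ae hpt, integral_const_mul,
          integral_add (by exact hbInt.add (hψInt.const_mul 2)) hrInt,
          integral_add hbInt (hψInt.const_mul 2), integral_const_mul, integral_const_mul,
          integral_prod_symm _ hψInt]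
    _ = _ := by
        rw [integral_congr_ae hterm, integral_prod_symm _ hbInt, integral_prod_symm _ hrInt]

theorem le_objective_mix (hψ : ψ.PosSemidef) (hψs : ψ.IsSymm) (hr : r.PosSemidef)
    (hb : b.PosSemidef) {ρ : ℝ} (hρ0 : 0 ≤ ρ) (hρ1 : ρ ≤ 1) :
    ρ * objective μ ν ψ r b A q η + (1 - ρ) * objective μ ν ψ r b A q κ
      ≤ objective μ ν ψ r b A q (fun t ω => ρ • η t ω + (1 - ρ) • κ t ω) := by
  have quad_nonneg {M : Matrix n n ℝ} (hM : M.PosSemidef) (x : n → ℝ) : 0 ≤ x ⬝ᵥ M *ᵥ x := by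
    simpa using hM.dotProduct_mulVec_nonneg x
  rw [← sub_nonneg, ← sub_sub, objective_mix_sub hq hA hη hκ hψs ρ]
  refine mul_nonneg (mul_nonneg hρ0 (sub_nonneg.2 hρ1)) (add_nonneg (add_nonneg ?_ ?_) ?_)
  · exact integral_nonneg fun _ => integral_nonneg fun _ => quad_nonneg hb _
  · exact integral_nonneg fun _ => quad_nonneg hψ _
  · exact integral_nonneg fun _ => integral_nonneg fun _ => quad_nonneg hr _

end Control

theorem stmt8_general {K : ℕ} {Ω : Type*} [MeasurableSpace Ω] (μ : Measure Ω)
    [IsProbabilityMeasure μ] (T : ℝ) (hT : 0 ≤ T)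
    (ψ r b : Matrix (Fin K) (Fin K) ℝ)
    (hψ : ψ.PosSemidef) (hr : r.PosSemidef) (hb : b.PosDef)
    (hψs : ψ.IsSymm)
    (q : Ω → (Fin K → ℝ)) (hq : MemLp q 2 μ)
    (A η κ : ℝ → Ω → (Fin K → ℝ))
    (hA : MemLp (Function.uncurry fun t ω => A t ω) 2
      ((volume.restrict (Set.Ioc (0:ℝ) T)).prod μ))
    (hη : MemLp (Function.uncurry fun t ω => η t ω) 2
      ((volume.restrict (Set.Ioc (0:ℝ) T)).prod μ))
    (hκ : MemLp (Function.uncurry fun t ω => κ t ω) 2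
      ((volume.restrict (Set.Ioc (0:ℝ) T)).prod μ))
    (ρ : ℝ) (hρ0 : 0 < ρ) (hρ1 : ρ < 1)
    (Q : (ℝ → Ω → (Fin K → ℝ)) → ℝ → Ω → (Fin K → ℝ))
    (hQ : ∀ ξ t ω, Q ξ t ω = q ω + ∫ s in (0:ℝ)..t, ξ s ω)
    (J : (ℝ → Ω → (Fin K → ℝ)) → ℝ)
    (hJ : ∀ ξ, J ξ = ∫ ω, (∫ t in (0:ℝ)..T,
      (-(ξ t ω ⬝ᵥ b.mulVec (ξ t ω))
        + (A t ω - (2:ℝ) • ψ.mulVec (ξ t ω) - r.mulVec (Q ξ t ω)) ⬝ᵥ Q ξ t ω)) ∂μ) :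
    (J (fun t ω => ρ • η t ω + (1 - ρ) • κ t ω) - ρ * J η - (1 - ρ) * J κ
      = ρ * (1 - ρ) *
        ((∫ ω, (∫ t in (0:ℝ)..T,
            (η t ω - κ t ω) ⬝ᵥ b.mulVec (η t ω - κ t ω)) ∂μ)
         + (∫ ω, (Q η T ω - Q κ T ω) ⬝ᵥ ψ.mulVec (Q η T ω - Q κ T ω) ∂μ)
         + ∫ ω, (∫ t in (0:ℝ)..T,
            (Q η t ω - Q κ t ω) ⬝ᵥ r.mulVec (Q η t ω - Q κ t ω)) ∂μ))
    ∧ ρ * J η + (1 - ρ) * J κ ≤ J (fun t ω => ρ • η t ω + (1 - ρ) • κ t ω) := by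
  set ν := volume.restrict (Ioc (0 : ℝ) T)
  have hQν (ξ ω) : ∀ t ∈ Ioc 0 T, Q ξ t ω = inventory ν q ξ t ω := fun t ht => by
    rw [hQ, inventory, intervalIntegral_eq_setIntegral_Iic ht.1.le ht.2]
  have hQT (ξ ω) : Q ξ T ω = terminalInventory ν q ξ ω := by
    rw [hQ, terminalInventory, intervalIntegral.integral_of_le hT]
  have hJν (ξ) : J ξ = objective μ ν ψ r b A q ξ := by
    rw [hJ]
    exact integral_intervalIntegral_eq_integral_restrict hT fun ω t ht => by
      simp only [runningReward, hQν ξ ω t ht]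
  simp only [hJν, hQT]
  rw [integral_intervalIntegral_eq_integral_restrict hT fun _ _ _ => rfl,
    integral_intervalIntegral_eq_integral_restrict hT fun ω t ht => by
      rw [hQν η ω t ht, hQν κ ω t ht]]
  exact ⟨objective_mix_sub hq hA hη hκ hψs ρ,
    le_objective_mix hq hA hη hκ hψ hψs hr hb.posSemidef hρ0.le hρ1.le⟩

/-- strict concavity identity for the quadratic-penalized control
functional `J(η) = E ∫_0^T (-ηᵀbη + (A - 2ψη - rQ^η)ᵀ Q^η) dt`, with
`Q^η_t = q + ∫_0^t η_s ds`. -/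
theorem stmt8 {K : ℕ} {Ω : Type*} [MeasurableSpace Ω] (μ : Measure Ω)
    [IsProbabilityMeasure μ] (T : ℝ) (hT : 0 ≤ T)
    (ψ r b : Matrix (Fin K) (Fin K) ℝ)
    (hψ : ψ.PosSemidef) (hr : r.PosSemidef) (hb : b.PosDef)
    (hψs : ψ.IsSymm) (hrs : r.IsSymm) (hbs : b.IsSymm)
    (q : Ω → (Fin K → ℝ)) (hq : MemLp q 2 μ)
    (A η κ : ℝ → Ω → (Fin K → ℝ))
    (hA : MemLp (Function.uncurry fun t ω => A t ω) 2
      ((volume.restrict (Set.Ioc (0:ℝ) T)).prod μ))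
    (hη : MemLp (Function.uncurry fun t ω => η t ω) 2
      ((volume.restrict (Set.Ioc (0:ℝ) T)).prod μ))
    (hκ : MemLp (Function.uncurry fun t ω => κ t ω) 2
      ((volume.restrict (Set.Ioc (0:ℝ) T)).prod μ))
    (ρ : ℝ) (hρ0 : 0 < ρ) (hρ1 : ρ < 1)
    (Q : (ℝ → Ω → (Fin K → ℝ)) → ℝ → Ω → (Fin K → ℝ))
    (hQ : ∀ ξ t ω, Q ξ t ω = q ω + ∫ s in (0:ℝ)..t, ξ s ω)
    (J : (ℝ → Ω → (Fin K → ℝ)) → ℝ)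
    (hJ : ∀ ξ, J ξ = ∫ ω, (∫ t in (0:ℝ)..T,
      (-(ξ t ω ⬝ᵥ b.mulVec (ξ t ω))
        + (A t ω - (2:ℝ) • ψ.mulVec (ξ t ω) - r.mulVec (Q ξ t ω)) ⬝ᵥ Q ξ t ω)) ∂μ) :
    (J (fun t ω => ρ • η t ω + (1 - ρ) • κ t ω) - ρ * J η - (1 - ρ) * J κ
      = ρ * (1 - ρ) *
        ((∫ ω, (∫ t in (0:ℝ)..T,
            (η t ω - κ t ω) ⬝ᵥ b.mulVec (η t ω - κ t ω)) ∂μ)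
         + (∫ ω, (Q η T ω - Q κ T ω) ⬝ᵥ ψ.mulVec (Q η T ω - Q κ T ω) ∂μ)
         + ∫ ω, (∫ t in (0:ℝ)..T,
            (Q η t ω - Q κ t ω) ⬝ᵥ r.mulVec (Q η t ω - Q κ t ω)) ∂μ))
    ∧ ρ * J η + (1 - ρ) * J κ ≤ J (fun t ω => ρ • η t ω + (1 - ρ) • κ t ω) :=
  stmt8_general μ T hT ψ r b hψ hr hb hψs q hq A η κ hA hη hκ ρ hρ0 hρ1 Q hQ J hJ
end

section
/- Exponential-weight contraction lemma: let H = L²(Ω×[0,T];ℝ^K) with the filtration-projection, K > 0, and define Ψ(γ,ξ)_t = ( -c·E[∫_t^T ξ_s ds | G_t], -E[∫_t^T γ_s ds | G_t] ) for a constant c ≥ 0. Then for every C > 0 and every (γ,ξ) ∈ H×H: E[∫_0^T e^{Ct} |E[∫_t^T ξ_s ds | G_t]|² dt] ≤ (T/C) E[∫_0^T e^{Cs}|ξ_s|² ds]. Consequently, choosing C > T·max{c², 1}, Ψ is a contraction on H×H equipped with the equivalent weighted norm ‖(γ,ξ)‖² = E∫_0^T e^{Ct}(|γ_t|²+|ξ_t|²)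 dt, and its unique fixed point is (0,0). -/
/-!
Conditioning is an `L²` contraction and, by Cauchy–Schwarz, `|∫_t^T ξ_s ds|² ≤ T ∫_t^T |ξ_s|² ds`;
integrating against `e^{Ct}` and exchanging the order of integration costs only a factor
`∫_0^s e^{Ct} dt ≤ e^{Cs}/C`. For a fixed point `(γ, ξ)` this gives, in the `e^{Ct}`-weighted
energy, `‖γ‖² ≤ c² (T/C) ‖ξ‖²` and `‖ξ‖² ≤ (T/C) ‖γ‖²`; once `C` is large both energies vanish.
-/

open MeasureTheory Set Filter Function Real
open scoped ENNReal

section Integrals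

variable {α : Type*} [MeasurableSpace α] {μ : Measure α} {E : Type*} [NormedAddCommGroup E]

theorem lintegral_sq_le_measure_univ_mul {f : α → ℝ≥0∞} (hf : AEMeasurable f μ) :
    (∫⁻ a, f a ∂μ) ^ 2 ≤ μ univ * ∫⁻ a, f a ^ 2 ∂μ := by
  have holder := ENNReal.lintegral_mul_le_Lp_mul_Lq μ Real.HolderConjugate.two_two hf
    (aemeasurable_const (b := 1))
  have sq_rpow_half : ∀ x : ℝ≥0∞, (x ^ (1 / 2 : ℝ)) ^ 2 = x := fun x => by
    rw [← ENNReal.rpow_natCast, ← ENNReal.rpow_mul]; norm_num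
  simp only [Pi.mul_apply, mul_one, ENNReal.one_rpow, lintegral_const, one_mul] at holder
  calc (∫⁻ a, f a ∂μ) ^ 2
      ≤ ((∫⁻ a, f a ^ (2 : ℝ) ∂μ) ^ (1 / 2 : ℝ) * μ univ ^ (1 / 2 : ℝ)) ^ 2 := by gcongr
    _ = μ univ * ∫⁻ a, f a ^ 2 ∂μ := by
      rw [mul_pow, sq_rpow_half, sq_rpow_half, mul_comm]
      simp only [ENNReal.rpow_two]

theorem enorm_integral_sq_le [NormedSpace ℝ E] {f : α → E} (hf : AEStronglyMeasurable f μ) :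
    ‖∫ a, f a ∂μ‖ₑ ^ 2 ≤ μ univ * ∫⁻ a, ‖f a‖ₑ ^ 2 ∂μ := by
  grw [enorm_integral_le_lintegral_enorm]
  exact lintegral_sq_le_measure_univ_mul hf.enorm

theorem ofReal_integral_le_lintegral_ofReal {f : α → ℝ} (hf : 0 ≤ f) :
    ENNReal.ofReal (∫ a, f a ∂μ) ≤ ∫⁻ a, ENNReal.ofReal (f a) ∂μ := by
  simpa only [Real.enorm_of_nonneg (integral_nonneg hf), Real.enorm_of_nonneg (hf _)]
    using enorm_integral_le_lintegral_enorm f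

theorem ofReal_integral_norm_sq_le_lintegral (f : α → E) :
    ENNReal.ofReal (∫ a, ‖f a‖ ^ 2 ∂μ) ≤ ∫⁻ a, ‖f a‖ₑ ^ 2 ∂μ := by
  simpa only [ENNReal.ofReal_pow (norm_nonneg _), ofReal_norm]
    using ofReal_integral_le_lintegral_ofReal (μ := μ) fun a => sq_nonneg ‖f a‖

theorem ofReal_integral_norm_sq_eq_lintegral {f : α → E} (hf : Integrable (fun a => ‖f a‖ ^ 2) μ) :
    ENNReal.ofReal (∫ a, ‖f a‖ ^ 2 ∂μ) = ∫⁻ a, ‖f a‖ₑ ^ 2 ∂μ := by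
  rw [ofReal_integral_eq_lintegral_ofReal hf (.of_forall fun a => sq_nonneg _)]
  simp only [ENNReal.ofReal_pow (norm_nonneg _), ofReal_norm]

end Integrals

theorem lintegral_enorm_integral_sq_le {α β E : Type*} [MeasurableSpace α] [MeasurableSpace β]
    [NormedAddCommGroup E] [NormedSpace ℝ E] {κ : Measure α} [IsFiniteMeasure κ]
    {μ : Measure β} [SFinite μ] {F : α → β → E}
    (hF : AEStronglyMeasurable (uncurry F) (κ.prod μ)) :
    ∫⁻ ω, ‖∫ s, F s ω ∂κ‖ₑ ^ 2 ∂μ ≤ κ univ * ∫⁻ s, ∫⁻ ω, ‖F s ω‖ₑ ^ 2 ∂μ ∂κ := by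
  calc ∫⁻ ω, ‖∫ s, F s ω ∂κ‖ₑ ^ 2 ∂μ
      ≤ ∫⁻ ω, κ univ * ∫⁻ s, ‖F s ω‖ₑ ^ 2 ∂κ ∂μ := by
        refine lintegral_mono_ae ?_
        filter_upwards [hF.prodMk_right] with ω hω using enorm_integral_sq_le hω
    _ = κ univ * ∫⁻ ω, ∫⁻ s, ‖F s ω‖ₑ ^ 2 ∂κ ∂μ := lintegral_const_mul' _ _ (measure_ne_top _ _)
    _ = κ univ * ∫⁻ s, ∫⁻ ω, ‖F s ω‖ₑ ^ 2 ∂μ ∂κ := by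
        rw [lintegral_lintegral_swap (hF.prod_swap.enorm.pow_const 2)]

theorem lintegral_enorm_condExp_sq_le {Ω E : Type*} [NormedAddCommGroup E] [NormedSpace ℝ E]
    [CompleteSpace E] {m m₀ : MeasurableSpace Ω} (μ : Measure Ω) (f : Ω → E) :
    ∫⁻ ω, ‖μ[f | m] ω‖ₑ ^ 2 ∂μ ≤ ∫⁻ ω, ‖f ω‖ₑ ^ 2 ∂μ := by
  have sq_eLpNorm := fun g : Ω → E =>
    eLpNorm_nnreal_pow_eq_lintegral (μ := μ) (f := g) (p := 2) two_ne_zero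
  simp only [NNReal.coe_ofNat, ENNReal.rpow_two] at sq_eLpNorm
  rw [← sq_eLpNorm, ← sq_eLpNorm]
  exact pow_le_pow_left' (eLpNorm_condExp_le_eLpNorm f one_le_two) 2

theorem lintegral_exp_mul_Iic {C : ℝ} (hC : 0 < C) (s : ℝ) :
    ∫⁻ t in Iic s, ENNReal.ofReal (exp (C * t)) = ENNReal.ofReal (exp (C * s) / C) := by
  rw [← integral_exp_mul_Iic hC, ofReal_integral_eq_lintegral_ofReal
    (integrableOn_exp_mul_Iic hC s) (.of_forall fun _ => (exp_pos _).le)]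

theorem lintegral_exp_mul_lintegral_Ioc_le {C : ℝ} (hC : 0 < C) (a T : ℝ) {h : ℝ → ℝ≥0∞}
    (hh : AEMeasurable h (volume.restrict (Ioc a T))) :
    ∫⁻ t in Ioc a T, ENNReal.ofReal (exp (C * t)) * ∫⁻ s in Ioc t T, h s
      ≤ ENNReal.ofReal C⁻¹ * ∫⁻ s in Ioc a T, ENNReal.ofReal (exp (C * s)) * h s := by
  let ν := volume.restrict (Ioc a T)
  have hw : Measurable fun t => ENNReal.ofReal (exp (C * t)) := by fun_prop
  have tail_eq : ∀ t ∈ Ioc a T, ∫⁻ s in Ioc t T, h s = ∫⁻ s, (Ioi t).indicator h s ∂ν := by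
    intro t ht
    rw [lintegral_indicator measurableSet_Ioi, Measure.restrict_restrict measurableSet_Ioi,
      inter_comm, Ioc_inter_Ioi, sup_eq_right.2 ht.1.le]
  have hΦ : AEMeasurable (uncurry fun t s => ENNReal.ofReal (exp (C * t)) * (Ioi t).indicator h s)
      (ν.prod ν) := by
    have : (uncurry fun t s => ENNReal.ofReal (exp (C * t)) * (Ioi t).indicator h s)
        = {p : ℝ × ℝ | p.1 < p.2}.indicator fun p => ENNReal.ofReal (exp (C * p.1)) * h p.2 := by
      ext ⟨t, s⟩
      by_cases hts : t < s <;> simp [indicator, hts]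
    rw [this]
    exact ((hw.comp measurable_fst).aemeasurable.mul hh.comp_snd).indicator
      (measurableSet_lt measurable_fst measurable_snd)
  calc ∫⁻ t, ENNReal.ofReal (exp (C * t)) * (∫⁻ s in Ioc t T, h s) ∂ν
      = ∫⁻ t, ∫⁻ s, ENNReal.ofReal (exp (C * t)) * (Ioi t).indicator h s ∂ν ∂ν := by
        refine setLIntegral_congr_fun measurableSet_Ioc fun t ht => ?_
        rw [tail_eq t ht, lintegral_const_mul' _ _ ENNReal.ofReal_ne_top]
    _ = ∫⁻ s, (∫⁻ t, (Iio s).indicator (fun t => ENNReal.ofReal (exp (C * t))) t ∂ν) * h s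
          ∂ν := by
        rw [lintegral_lintegral_swap hΦ]
        refine lintegral_congr fun s => ?_
        rw [← lintegral_mul_const _ (hw.indicator measurableSet_Iio)]
        refine lintegral_congr fun t => ?_
        by_cases hts : t < s <;> simp [indicator, hts]
    _ ≤ ∫⁻ s, ENNReal.ofReal C⁻¹ * (ENNReal.ofReal (exp (C * s)) * h s) ∂ν := by
        refine lintegral_mono fun s => ?_
        rw [← mul_assoc, ← ENNReal.ofReal_mul (inv_pos.2 hC).le, inv_mul_eq_div,
          ← lintegral_exp_mul_Iic hC, lintegral_indicator measurableSet_Iio]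
        gcongr
        · exact Iio_subset_Iic_self
        · exact Measure.restrict_le_self
    _ = ENNReal.ofReal C⁻¹ * ∫⁻ s, ENNReal.ofReal (exp (C * s)) * h s ∂ν :=
        lintegral_const_mul' _ _ ENNReal.ofReal_ne_top

section Processes

variable {Ω E : Type*} {m : MeasurableSpace Ω} [NormedAddCommGroup E] {μ : Measure Ω}
  {T C : ℝ} {ξ ζ : ℝ → Ω → E}

/-- The squared weighted norm `‖ξ‖²_C` of the paper. -/
noncomputable def weightedEnergy (μ : Measure Ω) (T C : ℝ) (ξ : ℝ → Ω → E) : ℝ :=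
  ∫ t in (0 : ℝ)..T, exp (C * t) * ∫ ω, ‖ξ t ω‖ ^ 2 ∂μ

/-- In this notation `Ψ(γ, ξ) = (-c • tailCondExp ξ, -tailCondExp γ)`. -/
noncomputable def tailCondExp [NormedSpace ℝ E] [CompleteSpace E] (μ : Measure Ω)
    (𝒢 : ℝ → MeasurableSpace Ω) (T : ℝ) (ξ : ℝ → Ω → E) (t : ℝ) : Ω → E :=
  μ[fun ω => ∫ s in t..T, ξ s ω | 𝒢 t]

theorem weightedEnergy_nonneg (hT : 0 ≤ T) : 0 ≤ weightedEnergy μ T C ξ :=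
  intervalIntegral.integral_nonneg hT fun _ _ =>
    mul_nonneg (exp_pos _).le (integral_nonneg fun _ => sq_nonneg _)

theorem weightedEnergy_eq_sq_mul_of_ae_eq_smul [NormedSpace ℝ E] (hT : 0 ≤ T) (r : ℝ)
    (h : ∀ t ∈ Icc 0 T, ξ t =ᵐ[μ] r • ζ t) :
    weightedEnergy μ T C ξ = r ^ 2 * weightedEnergy μ T C ζ := by
  rw [weightedEnergy, weightedEnergy, ← intervalIntegral.integral_const_mul]
  refine intervalIntegral.integral_congr fun t ht => ?_
  rw [uIcc_of_le hT] at ht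
  have norm_sq_eq : (fun ω => ‖ξ t ω‖ ^ 2) =ᵐ[μ] fun ω => r ^ 2 * ‖ζ t ω‖ ^ 2 := by
    filter_upwards [h t ht] with ω hω
    rw [hω, Pi.smul_apply, norm_smul, mul_pow, Real.norm_eq_abs, sq_abs]
  rw [integral_congr_ae norm_sq_eq, integral_const_mul]
  ring

theorem integrable_integral_norm_sq [SFinite μ] {ν : Measure ℝ}
    (hξ : MemLp (uncurry ξ) 2 (ν.prod μ)) :
    Integrable (fun t => ∫ ω, ‖ξ t ω‖ ^ 2 ∂μ) ν :=
  (hξ.integrable_norm_pow two_ne_zero).integral_prod_left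

theorem ae_integrable_norm_sq [SFinite μ] {ν : Measure ℝ} [SFinite ν]
    (hξ : MemLp (uncurry ξ) 2 (ν.prod μ)) :
    ∀ᵐ t ∂ν, Integrable (fun ω => ‖ξ t ω‖ ^ 2) μ :=
  (hξ.integrable_norm_pow two_ne_zero).prod_right_ae

theorem integrableOn_exp_mul_integral_norm_sq [SFinite μ]
    (hξ : MemLp (uncurry ξ) 2 ((volume.restrict (Ioc 0 T)).prod μ)) :
    IntegrableOn (fun t => exp (C * t) * ∫ ω, ‖ξ t ω‖ ^ 2 ∂μ) (Ioc 0 T) := by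
  have hIcc := (integrableOn_Icc_iff_integrableOn_Ioc (a := 0) (b := T)).2
    (integrable_integral_norm_sq hξ)
  exact (hIcc.continuousOn_mul (by fun_prop) isCompact_Icc).mono_set Ioc_subset_Icc_self

theorem ae_integral_norm_sq_eq_zero_of_weightedEnergy_eq_zero [SFinite μ] (hT : 0 ≤ T)
    (hξ : MemLp (uncurry ξ) 2 ((volume.restrict (Ioc 0 T)).prod μ))
    (h : weightedEnergy μ T C ξ = 0) :
    ∀ᵐ t ∂volume.restrict (Ioc 0 T), ∫ ω, ‖ξ t ω‖ ^ 2 ∂μ = 0 := by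
  rw [weightedEnergy, intervalIntegral.integral_of_le hT,
    integral_eq_zero_iff_of_nonneg (fun _ => mul_nonneg (exp_pos _).le
      (integral_nonneg fun _ => sq_nonneg _)) (integrableOn_exp_mul_integral_norm_sq hξ)] at h
  filter_upwards [h] with t ht
  exact (mul_eq_zero.1 ht).resolve_left (exp_pos _).ne'

theorem lintegral_enorm_tailCondExp_sq_le [NormedSpace ℝ E] [CompleteSpace E] [SFinite μ]
    (𝒢 : ℝ → MeasurableSpace Ω)
    (hξ : AEStronglyMeasurable (uncurry ξ) ((volume.restrict (Ioc 0 T)).prod μ))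
    {t : ℝ} (ht : t ∈ Icc 0 T) :
    ∫⁻ ω, ‖tailCondExp μ 𝒢 T ξ t ω‖ₑ ^ 2 ∂μ
      ≤ ENNReal.ofReal (T - t) * ∫⁻ s in Ioc t T, ∫⁻ ω, ‖ξ s ω‖ₑ ^ 2 ∂μ := by
  have restrict_eq : (volume.restrict (Ioc 0 T)).restrict (Ioc t T) = volume.restrict (Ioc t T) :=
    Measure.restrict_restrict_of_subset (Ioc_subset_Ioc_left ht.1)
  have hξt : AEStronglyMeasurable (uncurry ξ) ((volume.restrict (Ioc t T)).prod μ) := by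
    rw [← restrict_eq, Measure.restrict_prod_eq_prod_univ]
    exact hξ.restrict
  calc ∫⁻ ω, ‖tailCondExp μ 𝒢 T ξ t ω‖ₑ ^ 2 ∂μ
      ≤ ∫⁻ ω, ‖∫ s in Ioc t T, ξ s ω‖ₑ ^ 2 ∂μ := by
        simp only [tailCondExp, intervalIntegral.integral_of_le ht.2]
        exact lintegral_enorm_condExp_sq_le μ _
    _ ≤ ENNReal.ofReal (T - t) * ∫⁻ s in Ioc t T, ∫⁻ ω, ‖ξ s ω‖ₑ ^ 2 ∂μ := by
        grw [lintegral_enorm_integral_sq_le hξt, Measure.restrict_apply_univ, Real.volume_Ioc]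

theorem lintegral_exp_mul_lintegral_enorm_sq_eq [SFinite μ]
    (hξ : MemLp (uncurry ξ) 2 ((volume.restrict (Ioc 0 T)).prod μ)) :
    ∫⁻ s in Ioc 0 T, ENNReal.ofReal (exp (C * s)) * ∫⁻ ω, ‖ξ s ω‖ₑ ^ 2 ∂μ
      = ENNReal.ofReal (∫ s in Ioc 0 T, exp (C * s) * ∫ ω, ‖ξ s ω‖ ^ 2 ∂μ) := by
  rw [ofReal_integral_eq_lintegral_ofReal (integrableOn_exp_mul_integral_norm_sq hξ)
    (.of_forall fun _ => mul_nonneg (exp_pos _).le (integral_nonneg fun _ => sq_nonneg _))]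
  refine lintegral_congr_ae ?_
  filter_upwards [ae_integrable_norm_sq hξ] with s hs
  rw [ENNReal.ofReal_mul (exp_pos _).le, ofReal_integral_norm_sq_eq_lintegral (f := ξ s) hs]

theorem weightedEnergy_tailCondExp_le [NormedSpace ℝ E] [CompleteSpace E] [SFinite μ] (hT : 0 ≤ T)
    (𝒢 : ℝ → MeasurableSpace Ω)
    (hξ : MemLp (uncurry ξ) 2 ((volume.restrict (Ioc 0 T)).prod μ)) (hC : 0 < C) :
    weightedEnergy μ T C (tailCondExp μ 𝒢 T ξ) ≤ T / C * weightedEnergy μ T C ξ := by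
  have pointwise : ∀ t ∈ Ioc 0 T,
      ENNReal.ofReal (exp (C * t) * ∫ ω, ‖tailCondExp μ 𝒢 T ξ t ω‖ ^ 2 ∂μ)
        ≤ ENNReal.ofReal T
          * (ENNReal.ofReal (exp (C * t)) * ∫⁻ s in Ioc t T, ∫⁻ ω, ‖ξ s ω‖ₑ ^ 2 ∂μ) := by
    intro t ht
    rw [ENNReal.ofReal_mul (exp_pos _).le, mul_left_comm]
    gcongr
    calc ENNReal.ofReal (∫ ω, ‖tailCondExp μ 𝒢 T ξ t ω‖ ^ 2 ∂μ)
        ≤ ∫⁻ ω, ‖tailCondExp μ 𝒢 T ξ t ω‖ₑ ^ 2 ∂μ := ofReal_integral_norm_sq_le_lintegral _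
      _ ≤ ENNReal.ofReal (T - t) * ∫⁻ s in Ioc t T, ∫⁻ ω, ‖ξ s ω‖ₑ ^ 2 ∂μ :=
        lintegral_enorm_tailCondExp_sq_le 𝒢 hξ.1 (Ioc_subset_Icc_self ht)
      _ ≤ ENNReal.ofReal T * ∫⁻ s in Ioc t T, ∫⁻ ω, ‖ξ s ω‖ₑ ^ 2 ∂μ := by
        gcongr; linarith [ht.1]
  have hH : AEMeasurable (fun s => ∫⁻ ω, ‖ξ s ω‖ₑ ^ 2 ∂μ) (volume.restrict (Ioc 0 T)) :=
    (hξ.1.enorm.pow_const 2).lintegral_prod_right'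
  rw [weightedEnergy, weightedEnergy, intervalIntegral.integral_of_le hT,
    intervalIntegral.integral_of_le hT,
    ← ENNReal.ofReal_le_ofReal_iff (mul_nonneg (div_nonneg hT hC.le)
      (setIntegral_nonneg measurableSet_Ioc fun _ _ =>
        mul_nonneg (exp_pos _).le (integral_nonneg fun _ => sq_nonneg _)))]
  calc ENNReal.ofReal (∫ t in Ioc 0 T, exp (C * t) * ∫ ω, ‖tailCondExp μ 𝒢 T ξ t ω‖ ^ 2 ∂μ)
      ≤ ∫⁻ t in Ioc 0 T,
          ENNReal.ofReal (exp (C * t) * ∫ ω, ‖tailCondExp μ 𝒢 T ξ t ω‖ ^ 2 ∂μ) :=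
        ofReal_integral_le_lintegral_ofReal fun _ =>
          mul_nonneg (exp_pos _).le (integral_nonneg fun _ => sq_nonneg _)
    _ ≤ ENNReal.ofReal T * ∫⁻ t in Ioc 0 T,
          ENNReal.ofReal (exp (C * t)) * ∫⁻ s in Ioc t T, ∫⁻ ω, ‖ξ s ω‖ₑ ^ 2 ∂μ := by
        rw [← lintegral_const_mul' _ _ ENNReal.ofReal_ne_top]
        exact setLIntegral_mono' measurableSet_Ioc pointwise
    _ ≤ ENNReal.ofReal T * (ENNReal.ofReal C⁻¹ * ∫⁻ s in Ioc 0 T,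
          ENNReal.ofReal (exp (C * s)) * ∫⁻ ω, ‖ξ s ω‖ₑ ^ 2 ∂μ) := by
        gcongr
        exact lintegral_exp_mul_lintegral_Ioc_le hC 0 T hH
    _ = ENNReal.ofReal (T / C * ∫ s in Ioc 0 T, exp (C * s) * ∫ ω, ‖ξ s ω‖ ^ 2 ∂μ) := by
        rw [lintegral_exp_mul_lintegral_enorm_sq_eq hξ, ← mul_assoc,
          ← ENNReal.ofReal_mul hT, ← ENNReal.ofReal_mul (mul_nonneg hT (inv_pos.2 hC).le),
          div_eq_mul_inv]

theorem eq_zero_of_le_mul_of_le_mul {a b p q : ℝ} (ha : 0 ≤ a) (hb : 0 ≤ b) (hp : 0 ≤ p)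
    (hpq : p * q < 1) (hab : a ≤ p * b) (hba : b ≤ q * a) : a = 0 ∧ b = 0 := by
  have ha0 : a = 0 := by nlinarith [mul_le_mul_of_nonneg_left hba hp]
  exact ⟨ha0, le_antisymm (by simpa [ha0] using hba) hb⟩

theorem exists_weightedEnergy_eq_zero_of_fixedPoint [NormedSpace ℝ E] [CompleteSpace E]
    [SFinite μ] (hT : 0 ≤ T) (𝒢 : ℝ → MeasurableSpace Ω) (c : ℝ)
    (hξ : MemLp (uncurry ξ) 2 ((volume.restrict (Ioc 0 T)).prod μ))
    (hζ : MemLp (uncurry ζ) 2 ((volume.restrict (Ioc 0 T)).prod μ))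
    (hfix : ∀ t ∈ Icc 0 T,
      ξ t =ᵐ[μ] (-c) • tailCondExp μ 𝒢 T ζ t ∧ ζ t =ᵐ[μ] -tailCondExp μ 𝒢 T ξ t) :
    ∃ C, weightedEnergy μ T C ξ = 0 ∧ weightedEnergy μ T C ζ = 0 := by
  set C := T * (c ^ 2 + 1) + 1
  have hC : 0 < C := by positivity
  have hξle : weightedEnergy μ T C ξ ≤ c ^ 2 * (T / C) * weightedEnergy μ T C ζ := by
    rw [weightedEnergy_eq_sq_mul_of_ae_eq_smul hT (-c) fun t ht => (hfix t ht).1, neg_sq,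
      mul_assoc]
    gcongr
    exact weightedEnergy_tailCondExp_le hT 𝒢 hζ hC
  have hζle : weightedEnergy μ T C ζ ≤ T / C * weightedEnergy μ T C ξ := by
    rw [weightedEnergy_eq_sq_mul_of_ae_eq_smul hT (-1) fun t ht =>
      (hfix t ht).2.trans (.of_eq (neg_one_smul ℝ _).symm), neg_one_sq, one_mul]
    exact weightedEnergy_tailCondExp_le hT 𝒢 hξ hC
  have hcTC : c ^ 2 * (T / C) < 1 := by rw [← mul_div_assoc, div_lt_one hC]; nlinarith
  have hTC : T / C < 1 := by rw [div_lt_one hC]; nlinarith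
  exact ⟨C, eq_zero_of_le_mul_of_le_mul (weightedEnergy_nonneg hT) (weightedEnergy_nonneg hT)
    (by positivity) (mul_lt_one_of_nonneg_of_lt_one_left (by positivity) hcTC hTC.le)
    hξle hζle⟩

end Processes

theorem stmt13_general {K : ℕ} {Ω : Type*} {m : MeasurableSpace Ω} (μ : Measure Ω)
    [IsProbabilityMeasure μ] (T : ℝ) (hT : 0 ≤ T)
    (𝒢 : Filtration ℝ m) (c : ℝ)
    (γ ξ : ℝ → Ω → EuclideanSpace ℝ (Fin K))
    (hγ : MemLp (Function.uncurry fun t ω => γ t ω) 2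
      ((volume.restrict (Set.Ioc (0:ℝ) T)).prod μ))
    (hξ : MemLp (Function.uncurry fun t ω => ξ t ω) 2
      ((volume.restrict (Set.Ioc (0:ℝ) T)).prod μ)) :
    (∀ C : ℝ, 0 < C →
      (∫ t in (0:ℝ)..T, Real.exp (C * t) *
          ∫ ω, ‖(μ[(fun ω' => ∫ s in t..T, ξ s ω') | 𝒢 t]) ω‖^2 ∂μ)
        ≤ (T / C) * ∫ s in (0:ℝ)..T, Real.exp (C * s) * ∫ ω, ‖ξ s ω‖^2 ∂μ)
    ∧ ((∀ t ∈ Set.Icc (0:ℝ) T,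
          γ t =ᵐ[μ] (μ[(fun ω => (-c) • ∫ s in t..T, ξ s ω) | 𝒢 t])
          ∧ ξ t =ᵐ[μ] (μ[(fun ω => -∫ s in t..T, γ s ω) | 𝒢 t])) →
        (∫ t in (0:ℝ)..T, ∫ ω, (‖γ t ω‖^2 + ‖ξ t ω‖^2) ∂μ) = 0) := by
  refine ⟨fun C hC => weightedEnergy_tailCondExp_le hT 𝒢 hξ hC, fun hfix => ?_⟩
  obtain ⟨C, hγ0, hξ0⟩ := exists_weightedEnergy_eq_zero_of_fixedPoint hT 𝒢 c hγ hξ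
    fun t ht => ⟨(hfix t ht).1.trans (condExp_smul (-c) _ _), (hfix t ht).2.trans (condExp_neg _ _)⟩
  rw [intervalIntegral.integral_of_le hT]
  refine integral_eq_zero_of_ae ?_
  filter_upwards [ae_integral_norm_sq_eq_zero_of_weightedEnergy_eq_zero hT hγ hγ0,
    ae_integral_norm_sq_eq_zero_of_weightedEnergy_eq_zero hT hξ hξ0,
    ae_integrable_norm_sq hγ, ae_integrable_norm_sq hξ] with t hγt hξt hγi hξi
  rw [Pi.zero_apply, integral_add hγi hξi, hγt, hξt, add_zero]

/-- exponential-weight contraction lemma.  For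
`Ψ(γ,ξ)_t = (-c E[∫_t^T ξ_s ds | 𝒢_t], -E[∫_t^T γ_s ds | 𝒢_t])` one has the weighted
bound `E∫_0^T e^{Ct}|E[∫_t^T ξ_s ds|𝒢_t]|² dt ≤ (T/C) E∫_0^T e^{Cs}|ξ_s|² ds` for all
`C > 0`; consequently `Ψ` is a contraction for the weighted norm and its unique fixed
point is `(0,0)`. -/
theorem stmt13 {K : ℕ} {Ω : Type*} {m : MeasurableSpace Ω} (μ : Measure Ω)
    [IsProbabilityMeasure μ] (T : ℝ) (hT : 0 ≤ T)
    (𝒢 : Filtration ℝ m) (c : ℝ) (hc : 0 ≤ c)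
    (γ ξ : ℝ → Ω → EuclideanSpace ℝ (Fin K))
    (hγ : MemLp (Function.uncurry fun t ω => γ t ω) 2
      ((volume.restrict (Set.Ioc (0:ℝ) T)).prod μ))
    (hξ : MemLp (Function.uncurry fun t ω => ξ t ω) 2
      ((volume.restrict (Set.Ioc (0:ℝ) T)).prod μ)) :
    (∀ C : ℝ, 0 < C →
      (∫ t in (0:ℝ)..T, Real.exp (C * t) *
          ∫ ω, ‖(μ[(fun ω' => ∫ s in t..T, ξ s ω') | 𝒢 t]) ω‖^2 ∂μ)
        ≤ (T / C) * ∫ s in (0:ℝ)..T, Real.exp (C * s) * ∫ ω, ‖ξ s ω‖^2 ∂μ)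
    ∧ ((∀ t ∈ Set.Icc (0:ℝ) T,
          γ t =ᵐ[μ] (μ[(fun ω => (-c) • ∫ s in t..T, ξ s ω) | 𝒢 t])
          ∧ ξ t =ᵐ[μ] (μ[(fun ω => -∫ s in t..T, γ s ω) | 𝒢 t])) →
        (∫ t in (0:ℝ)..T, ∫ ω, (‖γ t ω‖^2 + ‖ξ t ω‖^2) ∂μ) = 0) :=
  stmt13_general μ T hT 𝒢 c γ ξ hγ hξ
end
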